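/- Let C be a completely pseudo-regular code in a finite simple connected graph Γ. Then for every k = 0,1,…,ε_C − 1, ev_C Γ = ev_{C_k} Γ ∪ ev_{C_{k+1}} Γ; i.e., no C-local eigenvalue can be simultaneously absent from the local spectra of two consecutive subconstituents. -/

import Mathlib

open Finset Polynomial BigOperators
open scoped Classical

noncomputable section

/-- The eigenspace of a real matrix `A` (viewed as an operator on Euclidean space)
for the value `μ`. -/
def eigSp {n : ℕ} (A : Matrix (Fin n) (Fin n) ℝ) (μ : ℝ) :
    Submodule ℝ (EuclideanSpace ℝ (Fin n)) :=
  Module.End.eigenspace (Matrix.toEuclideanLin A) μ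

/-- Orthogonal projection onto the `μ`-eigenspace of `A`. -/
def eigProj {n : ℕ} (A : Matrix (Fin n) (Fin n) ℝ) (μ : ℝ) (v : EuclideanSpace ℝ (Fin n)) :
    EuclideanSpace ℝ (Fin n) :=
  ((eigSp A μ).orthogonalProjection v : EuclideanSpace ℝ (Fin n))

/-- The weighted characteristic vector `ρS = Σ_{i∈S} ν_i e_i`. -/
def rho {n : ℕ} (ν : EuclideanSpace ℝ (Fin n)) (S : Finset (Fin n)) :
    EuclideanSpace ℝ (Fin n) :=
  WithLp.toLp 2 (fun i => if i ∈ S then ν i else 0)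

/-- The unit vector `e_S = ρS / ‖ρS‖`. -/
def unitVec {n : ℕ} (ν : EuclideanSpace ℝ (Fin n)) (S : Finset (Fin n)) :
    EuclideanSpace ℝ (Fin n) :=
  (‖rho ν S‖)⁻¹ • rho ν S

/-- The `S`-local multiplicity of `μ`: `m_S(μ) = ‖E_μ e_S‖²`. -/
def mloc {n : ℕ} (A : Matrix (Fin n) (Fin n) ℝ) (ν : EuclideanSpace ℝ (Fin n))
    (S : Finset (Fin n)) (μ : ℝ) : ℝ :=
  ‖eigProj A μ (unitVec ν S)‖ ^ 2

/-- The `S`-local spectrum: the set of `μ` whose eigenspace sees `ρS`. -/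
def evloc {n : ℕ} (A : Matrix (Fin n) (Fin n) ℝ) (ν : EuclideanSpace ℝ (Fin n))
    (S : Finset (Fin n)) : Set ℝ :=
  {μ | eigProj A μ (rho ν S) ≠ 0}

/-- Distance from a vertex `i` to a set of vertices `S`. -/
def dSet {n : ℕ} (G : SimpleGraph (Fin n)) (S : Finset (Fin n)) (i : Fin n) : ℕ :=
  sInf {k | ∃ j ∈ S, G.dist i j = k}

/-- Eccentricity (covering radius) of a vertex set `S`. -/
def eccS {n : ℕ} (G : SimpleGraph (Fin n)) (S : Finset (Fin n)) : ℕ :=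
  Finset.univ.sup (dSet G S)

/-- The `k`-th subconstituent `S_k = {i : dist(i,S) = k}`. -/
def subcons {n : ℕ} (G : SimpleGraph (Fin n)) (S : Finset (Fin n)) (k : ℕ) :
    Finset (Fin n) :=
  Finset.univ.filter (fun i => dSet G S i = k)

/-- `p(A)·v` for a polynomial `p`, a matrix `A` and a Euclidean vector `v`. -/
def aevalVec {n : ℕ} (A : Matrix (Fin n) (Fin n) ℝ) (p : Polynomial ℝ)
    (v : EuclideanSpace ℝ (Fin n)) : EuclideanSpace ℝ (Fin n) :=
  WithLp.toLp 2 ((Polynomial.aeval A p).mulVec v)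

/-- Moment-like parameter `π_l = ∏_{h≠l} |μ_l − μ_h|` for an enumeration `μ`. -/
def piC {d : ℕ} (μ : Fin (d + 1) → ℝ) (l : Fin (d + 1)) : ℝ :=
  ∏ h ∈ Finset.univ.erase l, |μ l - μ h|

/-!
The subconstituent vectors `ρC_j = p_j(A) ρC` (`j ≤ ε_C`) have disjoint nonempty supports, so they
are nonzero and pairwise orthogonal. Since `ρC = ∑_{μ ∈ ev_C Γ} E_μ ρC`, every `q(A) ρC` lies in a
space of dimension `|ev_C Γ| = d + 1`; hence `ε_C ≤ d`, and `p_0, …, p_{ε_C}` are orthogonal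
polynomials of degrees `0, …, ε_C` for the inner product `⟨f, g⟩ = ⟪f(A) ρC, g(A) ρC⟫`.
Consecutive orthogonal polynomials have no common root. Finally `E_μ ρC_j = p_j(μ) E_μ ρC`, so
`μ ∈ ev_C Γ` is missing from `ev_{C_k} Γ ∪ ev_{C_{k+1}} Γ` only if `p_k(μ) = p_{k+1}(μ) = 0`.
-/

open scoped RealInnerProductSpace
open Module.End

theorem Polynomial.exists_degree_sub_smul_lt {K : Type*} [Field K] {p q : K[X]} {m : ℕ}
    (hp : p.degree = m) (hq : q.degree ≤ m) : ∃ c : K, (q - c • p).degree < m := by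
  have hp0 : p ≠ 0 := by rintro rfl; simp at hp
  have hlead : p.coeff m = p.leadingCoeff := by
    rw [leadingCoeff, natDegree_eq_of_degree_eq_some hp]
  refine ⟨q.coeff m / p.leadingCoeff, (degree_lt_iff_coeff_zero _ _).mpr fun i hi => ?_⟩
  rw [coeff_sub, coeff_smul, smul_eq_mul]
  rcases hi.eq_or_lt with rfl | hlt
  · rw [hlead, div_mul_cancel₀ _ (leadingCoeff_ne_zero.mpr hp0), sub_self]
  · rw [coeff_eq_zero_of_degree_lt (hq.trans_lt (by exact_mod_cast hlt)),
      coeff_eq_zero_of_degree_lt (hp.trans_lt (by exact_mod_cast hlt)), mul_zero, sub_zero]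

theorem Module.End.aeval_apply_of_mem_eigenspace {R M : Type*} [CommRing R] [AddCommGroup M]
    [Module R M] {f : Module.End R M} {μ : R} {x : M} (hx : x ∈ eigenspace f μ) (q : R[X]) :
    aeval f q x = q.eval μ • x := by
  rcases eq_or_ne x 0 with rfl | hx0
  · simp
  · exact aeval_apply_of_hasEigenvector ⟨hx, hx0⟩

theorem card_le_card_of_orthogonal_mem_span {E : Type*} [NormedAddCommGroup E]
    [InnerProductSpace ℝ E] {ι : Type*} [Fintype ι] {w : ι → E} (hw : ∀ i, w i ≠ 0)
    (horth : Pairwise fun i j => ⟪w i, w j⟫ = 0) {s : Finset E}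
    (hs : ∀ i, w i ∈ Submodule.span ℝ (s : Set E)) : Fintype.card ι ≤ s.card :=
  calc Fintype.card ι
      = Module.finrank ℝ (Submodule.span ℝ (Set.range w)) :=
        (finrank_span_eq_card (linearIndependent_of_ne_zero_of_inner_eq_zero hw horth)).symm
    _ ≤ Module.finrank ℝ (Submodule.span ℝ (s : Set E)) :=
        Submodule.finrank_mono (Submodule.span_le.mpr (Set.range_subset_iff.mpr hs))
    _ ≤ s.card := finrank_span_finset_le_card s

namespace LinearMap.IsSymmetric

variable {E : Type*} [NormedAddCommGroup E] [InnerProductSpace ℝ E] {T : Module.End ℝ E}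

theorem aeval (hT : T.IsSymmetric) (q : ℝ[X]) : (Polynomial.aeval T q).IsSymmetric := by
  induction q using Polynomial.induction_on' with
  | add f g hf hg => rw [map_add]; exact hf.add hg
  | monomial k a =>
    rw [← smul_X_eq_monomial, map_smul, map_pow, aeval_X]
    exact (hT.pow k).smul rfl

variable [FiniteDimensional ℝ E]

theorem starProjection_eigenspace_aeval_apply (hT : T.IsSymmetric) (μ : ℝ) (q : ℝ[X]) (v : E) :
    (eigenspace T μ).starProjection (Polynomial.aeval T q v)
      = q.eval μ • (eigenspace T μ).starProjection v := by
  set K := eigenspace T μ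
  refine Submodule.eq_starProjection_of_mem_of_inner_eq_zero
    (K.smul_mem _ (K.starProjection_apply_mem v)) fun w hw => ?_
  rw [← aeval_apply_of_mem_eigenspace (K.starProjection_apply_mem v), ← map_sub,
    hT.aeval q, aeval_apply_of_mem_eigenspace hw, inner_smul_right,
    Submodule.starProjection_inner_eq_zero v w hw, mul_zero]

theorem starProjection_eigenspace_eq_zero_of_mem {μ μ' : ℝ} (hT : T.IsSymmetric)
    (hne : μ ≠ μ') {x : E} (hx : x ∈ eigenspace T μ') :
    (eigenspace T μ).starProjection x = 0 :=
  (Submodule.starProjection_apply_eq_zero_iff _).mpr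
    (hT.orthogonalFamily_eigenspaces.isOrtho hne.symm hx)

theorem eq_sum_starProjection_eigenspace (hT : T.IsSymmetric) {v : E} {s : Finset ℝ}
    (hs : ∀ μ ∉ s, (eigenspace T μ).starProjection v = 0) :
    v = ∑ μ ∈ s, (eigenspace T μ).starProjection v := by
  rw [← sub_eq_zero, ← Submodule.mem_bot ℝ,
    ← hT.orthogonalComplement_iSup_eigenspaces_eq_bot, ← Submodule.iInf_orthogonal,
    Submodule.mem_iInf]
  intro μ
  have hcross : ∀ μ' ≠ μ,
      (eigenspace T μ).starProjection ((eigenspace T μ').starProjection v) = 0 :=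
    fun μ' hne => hT.starProjection_eigenspace_eq_zero_of_mem hne.symm
      ((eigenspace T μ').starProjection_apply_mem v)
  rw [← Submodule.starProjection_apply_eq_zero_iff, map_sub, map_sum, sub_eq_zero]
  by_cases hμ : μ ∈ s
  · rw [Finset.sum_eq_single_of_mem μ hμ fun μ' _ hne => hcross μ' hne,
      Submodule.starProjection_eq_self_iff.mpr (Submodule.starProjection_apply_mem _ v)]
  · rw [hs μ hμ, Finset.sum_eq_zero fun μ' hμ' => hcross μ' (ne_of_mem_of_not_mem hμ' hμ)]

theorem aeval_apply_mem_span_starProjection_eigenspace (hT : T.IsSymmetric) {v : E}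
    {s : Finset ℝ} (hs : ∀ μ ∉ s, (eigenspace T μ).starProjection v = 0) (q : ℝ[X]) :
    Polynomial.aeval T q v ∈
      Submodule.span ℝ (s.image fun μ => (eigenspace T μ).starProjection v : Set E) := by
  conv in Polynomial.aeval T q v => rw [hT.eq_sum_starProjection_eigenspace hs, map_sum]
  refine Submodule.sum_mem _ fun μ hμ => ?_
  rw [aeval_apply_of_mem_eigenspace ((eigenspace T μ).starProjection_apply_mem v)]
  exact Submodule.smul_mem _ _ (Submodule.subset_span (Finset.mem_image_of_mem _ hμ))

theorem card_le_of_orthogonal_aeval (hT : T.IsSymmetric) {v : E} {s : Finset ℝ}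
    (hs : ∀ μ ∉ s, (eigenspace T μ).starProjection v = 0) {ι : Type*} [Fintype ι]
    {q : ι → ℝ[X]} (hne : ∀ i, Polynomial.aeval T (q i) v ≠ 0)
    (horth : Pairwise fun i j => ⟪Polynomial.aeval T (q i) v, Polynomial.aeval T (q j) v⟫ = 0) :
    Fintype.card ι ≤ s.card :=
  (card_le_card_of_orthogonal_mem_span hne horth
    fun i => hT.aeval_apply_mem_span_starProjection_eigenspace hs (q i)).trans Finset.card_image_le

end LinearMap.IsSymmetric

section OrthogonalPolynomials

variable {E : Type*} [NormedAddCommGroup E] [InnerProductSpace ℝ E]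
  {T : Module.End ℝ E} {e : E} {p : ℕ → ℝ[X]} {N : ℕ}

theorem inner_aeval_eq_zero_of_degree_lt (hdeg : ∀ k ≤ N, (p k).degree = k)
    (horth : ∀ i ≤ N, ∀ j ≤ N, i ≠ j → ⟪aeval T (p i) e, aeval T (p j) e⟫ = 0)
    {j : ℕ} (hj : j ≤ N) {q : ℝ[X]} (hq : q.degree < j) :
    ⟪aeval T (p j) e, aeval T q e⟫ = 0 := by
  suffices h : ∀ m ≤ j, ∀ q : ℝ[X], q.degree < m → ⟪aeval T (p j) e, aeval T q e⟫ = 0 from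
    h j le_rfl q hq
  intro m
  induction m with
  | zero =>
    intro _ q hq
    rw [Polynomial.degree_eq_bot.mp (WithBot.lt_coe_bot.mp hq)]
    simp
  | succ m ih =>
    intro hm q hq
    obtain ⟨c, hc⟩ :=
      Polynomial.exists_degree_sub_smul_lt (hdeg m (by omega)) (Order.le_of_lt_succ hq)
    rw [← sub_add_cancel q (c • p m), map_add, map_smul, LinearMap.add_apply,
      LinearMap.smul_apply, inner_add_right, inner_smul_right, ih (by omega) _ hc,
      horth j hj m (by omega) (by omega), mul_zero, add_zero]

theorem eval_ne_zero_or_eval_succ_ne_zero (hT : T.IsSymmetric)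
    (hdeg : ∀ k ≤ N, (p k).degree = k)
    (horth : ∀ i ≤ N, ∀ j ≤ N, i ≠ j → ⟪aeval T (p i) e, aeval T (p j) e⟫ = 0)
    {m : ℕ} (hm : m + 1 ≤ N) (hne : aeval T (p m) e ≠ 0) (μ : ℝ) :
    (p m).eval μ ≠ 0 ∨ (p (m + 1)).eval μ ≠ 0 := by
  -- With `p_m = (X - μ) s` and `p_{m+1} = (X - μ) r`, self-adjointness gives
  -- `⟨p_{m+1}, s⟩ = ⟨r, p_m⟩`; the left side vanishes as `deg s < m + 1`, while the right side is
  -- a nonzero multiple of `‖p_m‖²` as `deg r = m`.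
  by_contra! ⟨hroot, hroot_succ⟩
  set s := p m /ₘ (X - C μ)
  set r := p (m + 1) /ₘ (X - C μ)
  have hs : (X - C μ) * s = p m := mul_divByMonic_eq_iff_isRoot.mpr hroot
  have hr : (X - C μ) * r = p (m + 1) := mul_divByMonic_eq_iff_isRoot.mpr hroot_succ
  have hs_deg : s.degree < (m + 1 : ℕ) :=
    (degree_divByMonic_le _ _).trans_lt (by rw [hdeg m (by omega)]; exact_mod_cast m.lt_succ_self)
  have hr_deg : r.degree = m := by
    have hr0 : r ≠ 0 := by
      intro h
      have := hdeg (m + 1) hm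
      rw [← hr, h, mul_zero, degree_zero] at this
      exact WithBot.bot_ne_coe this
    rw [degree_eq_natDegree hr0, natDegree_divByMonic _ (monic_X_sub_C μ), natDegree_X_sub_C,
      natDegree_eq_of_degree_eq_some (hdeg (m + 1) hm), Nat.add_sub_cancel]
  obtain ⟨c, hc⟩ := Polynomial.exists_degree_sub_smul_lt (hdeg m (by omega)) hr_deg.le
  have hadj : ⟪aeval T (p (m + 1)) e, aeval T s e⟫ = ⟪aeval T r e, aeval T (p m) e⟫ := by
    rw [← hr, ← hs, map_mul, map_mul, Module.End.mul_apply, Module.End.mul_apply, hT.aeval]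
  have hkey : c * ⟪aeval T (p m) e, aeval T (p m) e⟫ = 0 := by
    rw [← inner_aeval_eq_zero_of_degree_lt hdeg horth hm hs_deg, hadj,
      ← sub_add_cancel r (c • p m), map_add, map_smul, LinearMap.add_apply,
      LinearMap.smul_apply, inner_add_left, real_inner_smul_left,
      real_inner_comm (aeval T (p m) e) (aeval T (r - c • p m) e),
      inner_aeval_eq_zero_of_degree_lt hdeg horth (by omega) hc]
    simp
  rcases mul_eq_zero.mp hkey with rfl | h
  · rw [zero_smul, sub_zero, hr_deg] at hc
    exact lt_irrefl _ hc
  · exact hne (inner_self_eq_zero.mp h)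

end OrthogonalPolynomials

variable {n : ℕ}

theorem rho_ne_zero {ν : EuclideanSpace ℝ (Fin n)} (hν : ∀ i, ν i ≠ 0) {S : Finset (Fin n)}
    (hS : S.Nonempty) : rho ν S ≠ 0 := by
  obtain ⟨i, hi⟩ := hS
  intro h
  have := congrArg (· i) h
  simp [rho, hi, hν i] at this

theorem inner_rho_eq_zero_of_disjoint (ν : EuclideanSpace ℝ (Fin n)) {S S' : Finset (Fin n)}
    (h : Disjoint S S') : ⟪rho ν S, rho ν S'⟫ = 0 := by
  refine Finset.sum_eq_zero fun i _ => ?_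
  by_cases hi : i ∈ S
  · simp [rho, Finset.disjoint_left.mp h hi]
  · simp [rho, hi]

section Subconstituents

variable {G : SimpleGraph (Fin n)} {S : Finset (Fin n)}

theorem dSet_le_dist {i c : Fin n} (hc : c ∈ S) : dSet G S i ≤ G.dist i c :=
  Nat.sInf_le ⟨c, hc, rfl⟩

theorem exists_dist_eq_dSet (hS : S.Nonempty) (i : Fin n) : ∃ c ∈ S, G.dist i c = dSet G S i :=
  let ⟨c, hc⟩ := hS
  Nat.sInf_mem (s := {k | ∃ j ∈ S, G.dist i j = k}) ⟨G.dist i c, c, hc, rfl⟩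

theorem exists_dSet_eq_of_dSet_eq_succ (hconn : G.Connected) (hS : S.Nonempty) {v : Fin n}
    {m : ℕ} (h : dSet G S v = m + 1) : ∃ u, dSet G S u = m := by
  obtain ⟨c, hc, hvc⟩ := exists_dist_eq_dSet (G := G) hS v
  obtain ⟨w, hw⟩ :=
    SimpleGraph.exists_walk_of_dist_ne_zero (G := G) (u := v) (v := c) (by omega)
  cases w with
  | nil => rw [SimpleGraph.dist_self] at hvc; omega
  | @cons _ u _ hadj w =>
    refine ⟨u, le_antisymm ?_ ?_⟩
    · have := (dSet_le_dist (G := G) (i := u) hc).trans (SimpleGraph.dist_le w)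
      simp only [SimpleGraph.Walk.length_cons] at hw
      omega
    · obtain ⟨c', hc', huc'⟩ := exists_dist_eq_dSet (G := G) hS u
      have htri := hconn.dist_triangle (u := v) (v := u) (w := c')
      rw [SimpleGraph.dist_eq_one_iff_adj.mpr hadj] at htri
      have := dSet_le_dist (G := G) (i := v) hc'
      omega

theorem exists_dSet_eq_of_le (hconn : G.Connected) (hS : S.Nonempty) {v : Fin n} {j : ℕ}
    (hj : j ≤ dSet G S v) : ∃ u, dSet G S u = j := by
  suffices h : ∀ m, (∃ v, dSet G S v = m) → ∀ j ≤ m, ∃ u, dSet G S u = j from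
    h _ ⟨v, rfl⟩ j hj
  intro m
  induction m with
  | zero => intro hv j hj; rwa [Nat.le_zero.mp hj]
  | succ m ih =>
    rintro ⟨v, hv⟩ j hj
    rcases hj.eq_or_lt with rfl | hlt
    · exact ⟨v, hv⟩
    · exact ih (exists_dSet_eq_of_dSet_eq_succ hconn hS hv) j (by omega)

theorem subcons_nonempty (hconn : G.Connected) (hS : S.Nonempty) {j : ℕ} (hj : j ≤ eccS G S) :
    (subcons G S j).Nonempty := by
  have : Nonempty (Fin n) := hS.to_subtype.map Subtype.val
  obtain ⟨v, -, hv⟩ := Finset.exists_mem_eq_sup Finset.univ Finset.univ_nonempty (dSet G S)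
  obtain ⟨u, hu⟩ := exists_dSet_eq_of_le hconn hS (hv ▸ hj : j ≤ dSet G S v)
  exact ⟨u, Finset.mem_filter.mpr ⟨Finset.mem_univ u, hu⟩⟩

theorem disjoint_subcons {j k : ℕ} (h : j ≠ k) : Disjoint (subcons G S j) (subcons G S k) :=
  Finset.disjoint_filter.mpr fun _ _ hj hk => h (hj.symm.trans hk)

end Subconstituents

theorem aevalVec_eq_aeval (A : Matrix (Fin n) (Fin n) ℝ) (q : ℝ[X])
    (v : EuclideanSpace ℝ (Fin n)) : aevalVec A q v = aeval (Matrix.toEuclideanLin A) q v := by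
  let φ : Matrix (Fin n) (Fin n) ℝ →ₐ[ℝ] Module.End ℝ (EuclideanSpace ℝ (Fin n)) :=
    AlgHom.ofLinearMap Matrix.toEuclideanLin.toLinearMap (by ext; simp)
      (fun _ _ => by ext; simp [Matrix.mulVec_mulVec])
  exact (LinearMap.congr_fun (aeval_algHom_apply φ A q) v).symm

theorem eigProj_eq_starProjection (A : Matrix (Fin n) (Fin n) ℝ) (μ : ℝ)
    (v : EuclideanSpace ℝ (Fin n)) :
    eigProj A μ v = (eigenspace (Matrix.toEuclideanLin A) μ).starProjection v :=
  rfl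

theorem eigProj_aevalVec {A : Matrix (Fin n) (Fin n) ℝ} (hA : A.IsHermitian) (μ : ℝ)
    (q : ℝ[X]) (v : EuclideanSpace ℝ (Fin n)) :
    eigProj A μ (aevalVec A q v) = q.eval μ • eigProj A μ v := by
  rw [eigProj_eq_starProjection, aevalVec_eq_aeval]
  exact (Matrix.isSymmetric_toEuclideanLin_iff.mpr hA).starProjection_eigenspace_aeval_apply μ q v

section Code

variable {G : SimpleGraph (Fin n)} {A : Matrix (Fin n) (Fin n) ℝ}
  {ν : EuclideanSpace ℝ (Fin n)} {C : Finset (Fin n)} {p : ℕ → ℝ[X]}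

theorem aeval_rho_ne_zero_of_code (hconn : G.Connected) (hν : ∀ i, ν i ≠ 0) (hC : C.Nonempty)
    (hcode : ∀ k ≤ eccS G C, rho ν (subcons G C k) = aevalVec A (p k) (rho ν C))
    {j : ℕ} (hj : j ≤ eccS G C) : aeval (Matrix.toEuclideanLin A) (p j) (rho ν C) ≠ 0 := by
  rw [← aevalVec_eq_aeval, ← hcode j hj]
  exact rho_ne_zero hν (subcons_nonempty hconn hC hj)

theorem inner_aeval_rho_eq_zero_of_code
    (hcode : ∀ k ≤ eccS G C, rho ν (subcons G C k) = aevalVec A (p k) (rho ν C))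
    {i j : ℕ} (hi : i ≤ eccS G C) (hj : j ≤ eccS G C) (hij : i ≠ j) :
    ⟪aeval (Matrix.toEuclideanLin A) (p i) (rho ν C),
      aeval (Matrix.toEuclideanLin A) (p j) (rho ν C)⟫ = 0 := by
  rw [← aevalVec_eq_aeval, ← aevalVec_eq_aeval, ← hcode i hi, ← hcode j hj]
  exact inner_rho_eq_zero_of_disjoint ν (disjoint_subcons hij)

theorem eccS_lt_ncard_evloc (hA : A.IsHermitian) (hconn : G.Connected) (hν : ∀ i, ν i ≠ 0)
    (hC : C.Nonempty) (hfin : (evloc A ν C).Finite)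
    (hcode : ∀ k ≤ eccS G C, rho ν (subcons G C k) = aevalVec A (p k) (rho ν C)) :
    eccS G C < (evloc A ν C).ncard := by
  have := (Matrix.isSymmetric_toEuclideanLin_iff.mpr hA).card_le_of_orthogonal_aeval
    (s := hfin.toFinset) (q := fun j : Fin (eccS G C + 1) => p j)
    (fun μ hμ => by simpa [evloc, eigProj_eq_starProjection] using hμ)
    (fun j => aeval_rho_ne_zero_of_code hconn hν hC hcode (Nat.lt_succ_iff.mp j.isLt))
    (fun i j hij => inner_aeval_rho_eq_zero_of_code hcode (Nat.lt_succ_iff.mp i.isLt)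
      (Nat.lt_succ_iff.mp j.isLt) (Fin.val_ne_of_ne hij))
  rwa [Fintype.card_fin, ← Set.ncard_eq_toFinset_card _ hfin, Nat.succ_le_iff] at this

end Code

theorem consecutive_subconstituents_cover_spectrum_general {n : ℕ} (G : SimpleGraph (Fin n)) [DecidableRel G.Adj]
    (hconn : G.Connected)
    (ν : EuclideanSpace ℝ (Fin n)) (hν : ∀ i, 0 < ν i)
    (C : Finset (Fin n)) (hC : C.Nonempty)
    (d : ℕ) (hd : d + 1 = (evloc (G.adjMatrix ℝ) ν C).ncard)
    (p : ℕ → Polynomial ℝ)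
    (hdeg : ∀ k ≤ d, (p k).natDegree = k)
    (hcode : ∀ k ≤ eccS G C, rho ν (subcons G C k) = aevalVec (G.adjMatrix ℝ) (p k) (rho ν C)) :
    ∀ k : ℕ, k + 1 ≤ eccS G C →
      evloc (G.adjMatrix ℝ) ν C
        = evloc (G.adjMatrix ℝ) ν (subcons G C k)
            ∪ evloc (G.adjMatrix ℝ) ν (subcons G C (k + 1)) := by
  intro k hk
  have hA : (G.adjMatrix ℝ).IsHermitian := G.isHermitian_adjMatrix ℝ
  have hν' : ∀ i, ν i ≠ 0 := fun i => (hν i).ne'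
  have hne : ∀ j ≤ eccS G C,
      aeval (Matrix.toEuclideanLin (G.adjMatrix ℝ)) (p j) (rho ν C) ≠ 0 :=
    fun _ => aeval_rho_ne_zero_of_code hconn hν' hC hcode
  have hecc : eccS G C < d + 1 :=
    hd ▸ eccS_lt_ncard_evloc hA hconn hν' hC (Set.finite_of_ncard_ne_zero (by omega)) hcode
  have hdeg' : ∀ j ≤ eccS G C, (p j).degree = j := fun j hj =>
    (degree_eq_iff_natDegree_eq fun h => hne j hj (by simp [h])).mpr (hdeg j (by omega))
  ext μ
  have hroots := eval_ne_zero_or_eval_succ_ne_zero (Matrix.isSymmetric_toEuclideanLin_iff.mpr hA)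
    hdeg' (fun i hi j hj => inner_aeval_rho_eq_zero_of_code hcode hi hj) hk (hne k (by omega)) μ
  simp only [evloc, Set.mem_union, Set.mem_ofPred_eq, hcode k (by omega), hcode (k + 1) hk,
    eigProj_aevalVec hA, smul_ne_zero_iff]
  tauto

theorem consecutive_subconstituents_cover_spectrum {n : ℕ} (hn : 0 < n) (G : SimpleGraph (Fin n)) [DecidableRel G.Adj]
    (hconn : G.Connected)
    (ν : EuclideanSpace ℝ (Fin n)) (hν : ∀ i, 0 < ν i) (lam0 : ℝ)
    (hPerron : (G.adjMatrix ℝ).mulVec ν = lam0 • ν)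
    (C : Finset (Fin n)) (hC : C.Nonempty)
    (d : ℕ) (hd : d + 1 = (evloc (G.adjMatrix ℝ) ν C).ncard)
    (p : ℕ → Polynomial ℝ)
    (hdeg : ∀ k ≤ d, (p k).natDegree = k)
    (horth : ∀ k ≤ d, ∀ h ≤ d, k ≠ h →
      (inner ℝ (aevalVec (G.adjMatrix ℝ) (p k) (unitVec ν C))
             (aevalVec (G.adjMatrix ℝ) (p h) (unitVec ν C)) : ℝ) = 0)
    (hnorm : ∀ k ≤ d,
      (inner ℝ (aevalVec (G.adjMatrix ℝ) (p k) (unitVec ν C))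
             (aevalVec (G.adjMatrix ℝ) (p k) (unitVec ν C)) : ℝ) = (p k).eval lam0)
    (hcode : ∀ k ≤ eccS G C, rho ν (subcons G C k) = aevalVec (G.adjMatrix ℝ) (p k) (rho ν C)) :
    ∀ k : ℕ, k + 1 ≤ eccS G C →
      evloc (G.adjMatrix ℝ) ν C
        = evloc (G.adjMatrix ℝ) ν (subcons G C k)
            ∪ evloc (G.adjMatrix ℝ) ν (subcons G C (k + 1)) :=
  consecutive_subconstituents_cover_spectrum_general G hconn ν hν C hC d hd p hdeg hcode
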